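/- Suppose a two-outcome projective measurement applied to a mixed quantum state ρ yields outcome 0 with probability 1 − ε. Then the post-measurement state ρ̃ (conditioned on outcome 0, i.e. PρP/tr(PρP) for the corresponding projector P) satisfies ‖ρ̃ − ρ‖_tr ≤ √ε. -/

import Mathlib

/-!
Write `ρ = Y Yᴴ` and `X = P Y / √(1 - ε)`, so that `ρ̃ = X Xᴴ` and `tr (X Xᴴ) = tr (Y Yᴴ) = 1`,
`tr (X Yᴴ) = √(1 - ε)`. If `S` is the sign of the Hermitian matrix `ρ̃ - ρ`, then
`tr |ρ̃ - ρ| = Re tr (S (X - Y) (X + Y)ᴴ)`, and Cauchy–Schwarz for the Frobenius inner product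
bounds this by `‖X - Y‖ ‖X + Y‖ = √((‖X‖² + ‖Y‖²)² - 4 (Re ⟪X, Y⟫)²) = 2 √ε`.
-/

open scoped ComplexOrder

namespace Matrix

variable {𝕜 n : Type*} [RCLike 𝕜] [Fintype n]

lemma re_trace_mul_conjTranspose_comm (X Y : Matrix n n 𝕜) :
    RCLike.re (Y * Xᴴ).trace = RCLike.re (X * Yᴴ).trace := by
  rw [← conjTranspose_conjTranspose X, ← conjTranspose_mul, trace_conjTranspose,
    conjTranspose_conjTranspose, RCLike.star_def, RCLike.conj_re]

lemma re_trace_mul_sub_mul_conjTranspose_add {S : Matrix n n 𝕜} (hS : S.IsHermitian)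
    (X Y : Matrix n n 𝕜) :
    RCLike.re (S * (X - Y) * (X + Y)ᴴ).trace = RCLike.re (S * (X * Xᴴ - Y * Yᴴ)).trace := by
  have hcross : RCLike.re (S * Y * Xᴴ).trace = RCLike.re (S * X * Yᴴ).trace := by
    rw [← re_trace_mul_conjTranspose_comm (S * X) Y, conjTranspose_mul, hS.eq,
      trace_mul_comm Y, trace_mul_cycle]
  simp only [conjTranspose_add, mul_add, sub_mul, mul_sub, trace_add, trace_sub, map_add,
    map_sub, ← Matrix.mul_assoc, hcross]
  ring

lemma re_trace_sub_mul_re_trace_add (X Y : Matrix n n 𝕜) :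
    RCLike.re ((X - Y) * (X - Y)ᴴ).trace * RCLike.re ((X + Y) * (X + Y)ᴴ).trace =
      (RCLike.re (X * Xᴴ).trace + RCLike.re (Y * Yᴴ).trace) ^ 2 -
        4 * RCLike.re (X * Yᴴ).trace ^ 2 := by
  simp only [conjTranspose_add, conjTranspose_sub, mul_add, add_mul, sub_mul, mul_sub,
    trace_add, trace_sub, map_add, map_sub, re_trace_mul_conjTranspose_comm X Y]
  ring

variable [DecidableEq n]

lemma norm_trace_mul_conjTranspose_le (X Y : Matrix n n 𝕜) :
    ‖(X * Yᴴ).trace‖ ≤ √(RCLike.re (X * Xᴴ).trace) * √(RCLike.re (Y * Yᴴ).trace) := by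
  -- the inner product induced by the identity matrix is the Frobenius one, `⟪a, b⟫ = tr (b aᴴ)`
  let := toMatrixSeminormedAddCommGroup (1 : Matrix n n 𝕜) PosSemidef.one
  let := toMatrixInnerProductSpace (1 : Matrix n n 𝕜) PosSemidef.one
  have hinner (a b : Matrix n n 𝕜) : inner 𝕜 a b = (b * aᴴ).trace :=
    (rfl : inner 𝕜 a b = (b * 1 * aᴴ).trace).trans (by rw [Matrix.mul_one])
  have hnorm (a : Matrix n n 𝕜) : ‖a‖ = √(RCLike.re (a * aᴴ).trace) := by
    rw [norm_eq_sqrt_re_inner (𝕜 := 𝕜), hinner]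
  rw [← hinner, ← hnorm, ← hnorm, mul_comm]
  exact norm_inner_le_norm Y X

lemma PosSemidef.exists_eq_mul_conjTranspose {A : Matrix n n 𝕜} (hA : A.PosSemidef) :
    ∃ Y : Matrix n n 𝕜, A = Y * Yᴴ := by
  open scoped MatrixOrder in
  obtain ⟨B, rfl⟩ := CStarAlgebra.nonneg_iff_eq_star_mul_self.mp hA.nonneg
  exact ⟨Bᴴ, by rw [conjTranspose_conjTranspose, star_eq_conjTranspose]⟩

lemma IsHermitian.trace_cfc {A : Matrix n n 𝕜} (hA : A.IsHermitian) (f : ℝ → ℝ) :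
    (cfc f A).trace = ∑ i, (f (hA.eigenvalues i) : 𝕜) := by
  rw [hA.cfc_eq, IsHermitian.cfc, Unitary.conjStarAlgAut_apply, trace_mul_cycle,
    Unitary.coe_star_mul_self, Matrix.one_mul, trace_diagonal]
  rfl

lemma IsHermitian.exists_trace_mul_eq_sum_abs_eigenvalues {D : Matrix n n 𝕜}
    (hD : D.IsHermitian) :
    ∃ S : Matrix n n 𝕜, S.IsHermitian ∧ S * S = 1 ∧
      (S * D).trace = ∑ i, ((|hD.eigenvalues i| : ℝ) : 𝕜) := by
  let sgn : ℝ → ℝ := fun x ↦ if 0 ≤ x then 1 else -1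
  have hD' : IsSelfAdjoint D := hD
  have hsgn : ContinuousOn sgn (spectrum ℝ D) := finite_real_spectrum.continuousOn sgn
  refine ⟨cfc sgn D, cfc_predicate sgn D, ?_, ?_⟩
  · rw [← cfc_mul sgn sgn D, ← cfc_one ℝ D]
    refine cfc_congr fun x _ ↦ ?_
    by_cases hx : 0 ≤ x <;> simp [sgn, hx]
  · nth_rewrite 2 [← cfc_id' ℝ D]
    rw [← cfc_mul sgn (fun x ↦ x) D, hD.trace_cfc]
    refine Finset.sum_congr rfl fun i _ ↦ ?_
    by_cases hx : 0 ≤ hD.eigenvalues i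
    · simp [sgn, hx, abs_of_nonneg hx]
    · simp [sgn, hx, abs_of_neg (not_le.mp hx)]

theorem IsHermitian.sum_abs_eigenvalues_le {D X Y : Matrix n n 𝕜} (hD : D.IsHermitian)
    (hDXY : D = X * Xᴴ - Y * Yᴴ) :
    ∑ i, |hD.eigenvalues i| ≤
      √((RCLike.re (X * Xᴴ).trace + RCLike.re (Y * Yᴴ).trace) ^ 2 -
        4 * RCLike.re (X * Yᴴ).trace ^ 2) := by
  obtain ⟨S, hS, hSS, hSD⟩ := hD.exists_trace_mul_eq_sum_abs_eigenvalues
  have hS_isometry (A : Matrix n n 𝕜) : (S * A * (S * A)ᴴ).trace = (A * Aᴴ).trace := by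
    rw [conjTranspose_mul, hS.eq, ← Matrix.mul_assoc, trace_mul_comm, ← Matrix.mul_assoc,
      ← Matrix.mul_assoc, hSS, Matrix.one_mul]
  have hre_nonneg (A : Matrix n n 𝕜) : 0 ≤ RCLike.re (A * Aᴴ).trace :=
    (RCLike.nonneg_iff.mp (posSemidef_self_mul_conjTranspose A).trace_nonneg).1
  calc ∑ i, |hD.eigenvalues i|
      = RCLike.re (S * D).trace := by simp [hSD]
    _ = RCLike.re (S * (X - Y) * (X + Y)ᴴ).trace := by
      rw [hDXY, re_trace_mul_sub_mul_conjTranspose_add hS]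
    _ ≤ ‖(S * (X - Y) * (X + Y)ᴴ).trace‖ := RCLike.re_le_norm _
    _ ≤ √(RCLike.re (S * (X - Y) * (S * (X - Y))ᴴ).trace) *
          √(RCLike.re ((X + Y) * (X + Y)ᴴ).trace) :=
      norm_trace_mul_conjTranspose_le _ _
    _ = _ := by
      rw [hS_isometry, ← Real.sqrt_mul (hre_nonneg _), re_trace_sub_mul_re_trace_add]

end Matrix

open Matrix

theorem stmt_1_general (n : ℕ) (ρ P : Matrix (Fin n) (Fin n) ℂ)
    (hρ : ρ.PosSemidef) (htr : ρ.trace = 1)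
    (hP : P.IsHermitian) (hproj : P * P = P)
    (ε : ℝ) (hε1 : ε < 1)
    (hprob : (P * ρ).trace = ((1 - ε : ℝ) : ℂ))
    (ρt : Matrix (Fin n) (Fin n) ℂ)
    (hρt : ρt = ((P * ρ * P).trace)⁻¹ • (P * ρ * P))
    (hD : (ρt - ρ).IsHermitian) :
    (∑ i, |hD.eigenvalues i|) / 2 ≤ Real.sqrt ε := by
  obtain ⟨Y, rfl⟩ := hρ.exists_eq_mul_conjTranspose
  set s := √(1 - ε)
  have hs : s ^ 2 = 1 - ε := Real.sq_sqrt (by linarith)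
  have hs0 : (s : ℂ) ≠ 0 := Complex.ofReal_ne_zero.2 (Real.sqrt_pos.2 (by linarith)).ne'
  have hs2 : ((s : ℂ) ^ 2) = ((1 - ε : ℝ) : ℂ) := by exact_mod_cast hs
  let X := (s : ℂ)⁻¹ • (P * Y)
  have hPρP : (P * (Y * Yᴴ) * P).trace = ((1 - ε : ℝ) : ℂ) := by
    rw [trace_mul_cycle, hproj, hprob]
  have hXX : X * Xᴴ = ((s : ℂ) ^ 2)⁻¹ • (P * (Y * Yᴴ) * P) := by
    simp only [X, conjTranspose_smul, conjTranspose_mul, hP.eq, Matrix.smul_mul,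
      Matrix.mul_smul, smul_smul, Matrix.mul_assoc]
    simp [pow_two, Complex.conj_ofReal]
  have hXY : X * Yᴴ = (s : ℂ)⁻¹ • (P * (Y * Yᴴ)) := by
    simp only [X, Matrix.smul_mul, Matrix.mul_assoc]
  have hDXY : ρt - Y * Yᴴ = X * Xᴴ - Y * Yᴴ := by rw [hρt, hXX, hPρP, hs2]
  have hXX_tr : RCLike.re (X * Xᴴ).trace = 1 := by
    rw [hXX, trace_smul, hPρP, ← hs2, smul_eq_mul, inv_mul_cancel₀ (pow_ne_zero 2 hs0)]
    simp
  have hYY_tr : RCLike.re (Y * Yᴴ).trace = 1 := by simp [htr]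
  have hXY_tr : RCLike.re (X * Yᴴ).trace = s := by
    rw [hXY, trace_smul, hprob, ← hs2, smul_eq_mul, pow_two, inv_mul_cancel_left₀ hs0]
    simp
  have hbound := hD.sum_abs_eigenvalues_le hDXY
  rw [hXX_tr, hYY_tr, hXY_tr, hs, show ((1 + 1) ^ 2 - 4 * (1 - ε) : ℝ) = 2 ^ 2 * ε by ring,
    Real.sqrt_mul (by norm_num), Real.sqrt_sq (by norm_num)] at hbound
  linarith

/-- Aaronson's "Almost As Good As New" lemma: if a two-outcome projective measurement
`{P, I-P}` on a density matrix `ρ` yields outcome `0` with probability `1 - ε`, then the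
post-measurement state `ρ̃ = PρP / tr(PρP)` satisfies `‖ρ̃ - ρ‖_tr ≤ √ε`, where the trace
distance is half the sum of absolute values of the eigenvalues of the (Hermitian)
difference. -/
theorem stmt_1 (n : ℕ) (ρ P : Matrix (Fin n) (Fin n) ℂ)
    (hρ : ρ.PosSemidef) (htr : ρ.trace = 1)
    (hP : P.IsHermitian) (hproj : P * P = P)
    (ε : ℝ) (hε0 : 0 ≤ ε) (hε1 : ε < 1)
    (hprob : (P * ρ).trace = ((1 - ε : ℝ) : ℂ))
    (ρt : Matrix (Fin n) (Fin n) ℂ)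
    (hρt : ρt = ((P * ρ * P).trace)⁻¹ • (P * ρ * P))
    (hD : (ρt - ρ).IsHermitian) :
    (∑ i, |hD.eigenvalues i|) / 2 ≤ Real.sqrt ε :=
  stmt_1_general n ρ P hρ htr hP hproj ε hε1 hprob ρt hρt hD
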